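/- Let X = {x₁,…,x_m} ⊆ {0,1}^d be finite with ∪_{j} supp(x_j) = {1,…,d}, let x̄ ∈ X, θ̄ ∈ ℝ^d, β > 0 with β + θ̄^⊤(x̄ − x) > 0 for all x ∈ X, τ ≥ 0, and assume the vectors (x̄ − x)/(β + θ̄^⊤(x̄ − x)), x ∈ X, are pairwise distinct. On the open set O = { λ ∈ ℝ^m : Σ_{j=1}^m λ_j x_{j,i} > 0 for all i ∈ {1,…,d} } define L(λ) = τ Σ_{j=1}^m θ̄^⊤(x̄ − x_j) λ_j + E_η[ max_{x∈X} (x̄ − x)^⊤ A_semi(λ)^{-1/2} η / (β + θ̄^⊤(x̄ − x)) ], where A_semi(λ)^{-1/2} is the diagonal matrix with entries (Σ_j λ_j x_{j,i})^{-1/2}. Then for every λ ∈ O: for η ~ N(0, I_d) the maximizer x̃(η) of x ↦ (x̄ − x)^⊤ A_semi(λ)^{-1/2} η / (β + θ̄^⊤(x̄ − x)) over X is almost surely unique, L is differentiable at λ, and ∂L/∂λ_i(λ) = τ θ̄^⊤(x̄ − x_i) − (1/2) E_η[ (β + θ̄^⊤(x̄ − x̃(η)))^{-1} Σ_{k=1}^d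 (x̄ − x̃(η))_k x_{i,k} η_k (Σ_{j : x_{j,k}=1} λ_j)^{-3/2} ]. (This is the paper's Lemma 7, differentiability of the Lagrangian objective used in stochastic Frank–Wolfe.) -/

import Mathlib

open MeasureTheory ProbabilityTheory

/-- The standard Gaussian measure `N(0, I_d)` on `ℝ^d`. -/
noncomputable def stdGaussian (d : ℕ) : Measure (Fin d → ℝ) :=
  Measure.pi fun _ => gaussianReal 0 1

/-- The ratio process `j ↦ (x̄ - x_j)ᵀ A_semi(λ)^{-1/2} η / (β + θ̄ᵀ(x̄ - x_j))`. -/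
noncomputable def ratioProc (d m : ℕ) (x : Fin m → Fin d → ℝ) (b : Fin m)
    (θb : Fin d → ℝ) (β : ℝ) (lam : Fin m → ℝ) (η : Fin d → ℝ) (j : Fin m) : ℝ :=
  (∑ i, (x b i - x j i) * η i / Real.sqrt (∑ j', lam j' * x j' i)) /
    (β + ∑ i, θb i * (x b i - x j i))

/-- The Lagrangian objective
`L(λ) = τ Σ_j θ̄ᵀ(x̄ - x_j) λ_j + E_η[max_j (x̄ - x_j)ᵀ A_semi(λ)^{-1/2} η / (β + θ̄ᵀ(x̄ - x_j))]`. -/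
noncomputable def lagrangian (d m : ℕ) (x : Fin m → Fin d → ℝ) (b : Fin m)
    (θb : Fin d → ℝ) (β τ : ℝ) (lam : Fin m → ℝ) : ℝ :=
  τ * ∑ j, (∑ i, θb i * (x b i - x j i)) * lam j +
    ∫ η, Finset.univ.sup' ⟨b, Finset.mem_univ b⟩ (ratioProc d m x b θb β lam η)
      ∂ stdGaussian d

/-!
The ratio process is linear in `η`: its `j`-th branch is `⟨a_j(λ), η⟩` with
`a_j(λ)_k = c_{jk} (Σ_l λ_l x_{l,k})^{-1/2}`, where `c_j = (x̄ - x_j) / (β + θ̄ᵀ(x̄ - x_j))`.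
On `O` the vectors `a_j(λ)` are pairwise distinct because the `c_j` are, so two branches tie only
on a hyperplane, which is Gaussian-null: the maximizer is a.s. unique. Each `a_j` is smooth near
`λ`, hence locally Lipschitz, so the maximum is Lipschitz in `λ` with a constant `C Σ_k |η_k|`
that is Gaussian-integrable, and wherever the maximizer is unique it has the derivative of the
maximizing branch. Differentiation under the integral sign then gives the formula.
-/

open Filter Topology

theorem MeasureTheory.Measure.AbsolutelyContinuous.pi_fin {n : ℕ} {α : Fin n → Type*}
    [∀ i, MeasurableSpace (α i)] {μ ν : ∀ i, Measure (α i)} [∀ i, SigmaFinite (μ i)]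
    [∀ i, SigmaFinite (ν i)] (h : ∀ i, μ i ≪ ν i) : Measure.pi μ ≪ Measure.pi ν := by
  induction n with
  | zero => rw [Measure.pi_of_empty μ, Measure.pi_of_empty ν]
  | succ n ih =>
    rw [← (measurePreserving_piFinSuccAbove μ 0).symm.map_eq,
      ← (measurePreserving_piFinSuccAbove ν 0).symm.map_eq]
    exact ((h 0).prod (ih fun _ => h _)).map (MeasurableEquiv.measurable _)

lemma stdGaussian_absolutelyContinuous (d : ℕ) : stdGaussian d ≪ volume := by
  rw [volume_pi]
  exact .pi_fin fun _ => gaussianReal_absolutelyContinuous 0 one_ne_zero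

lemma integrable_eval_stdGaussian {d : ℕ} (k : Fin d) :
    Integrable (fun η : Fin d → ℝ => η k) (stdGaussian d) :=
  ((measurePreserving_eval _ k).integrable_comp aestronglyMeasurable_id).2
    IsGaussian.integrable_id

lemma ae_dotProduct_ne_zero_stdGaussian {d : ℕ} {v : Fin d → ℝ} (hv : v ≠ 0) :
    ∀ᵐ η ∂stdGaussian d, v ⬝ᵥ η ≠ 0 := by
  refine (stdGaussian_absolutelyContinuous d).ae_le (?_ : ∀ᵐ η ∂volume, v ⬝ᵥ η ≠ 0)
  have hker : LinearMap.ker (dotProductBilin ℝ ℝ v) ≠ ⊤ := fun h => by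
    have hmem : v ∈ LinearMap.ker (dotProductBilin ℝ ℝ v) := h ▸ Submodule.mem_top
    exact hv (dotProduct_self_eq_zero.1 (by simpa using hmem))
  rw [ae_iff]
  convert Measure.addHaar_submodule volume _ hker using 2
  ext η
  simp

lemma ae_injective_dotProduct_stdGaussian {d : ℕ} {ι : Type*} [Countable ι] {v : ι → Fin d → ℝ}
    (hv : Function.Injective v) :
    ∀ᵐ η ∂stdGaussian d, Function.Injective fun j => v j ⬝ᵥ η := by
  simp only [Function.Injective, ae_all_iff]
  intro i j
  by_cases hij : i = j
  · exact ae_of_all _ fun _ _ => hij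
  · filter_upwards [ae_dotProduct_ne_zero_stdGaussian (sub_ne_zero.2 (hv.ne hij))] with η hη h
    exact absurd (by rw [sub_dotProduct, h, sub_self]) hη

section FiniteMax

variable {ι : Type*}

lemma LipschitzOnWith.finset_sup' {α : Type*} [PseudoEMetricSpace α] {s : Finset ι}
    (hs : s.Nonempty) {f : ι → α → ℝ} {K : NNReal} {t : Set α}
    (hf : ∀ i ∈ s, LipschitzOnWith K (f i) t) :
    LipschitzOnWith K (fun a => s.sup' hs (f · a)) t := by
  simp only [lipschitzOnWith_iff_restrict] at hf ⊢
  have hsup : t.domRestrict (fun a => s.sup' hs (f · a)) =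
      s.sup' hs fun i => t.domRestrict (f i) := by
    ext a
    rw [Finset.sup'_apply]
    rfl
  rw [hsup]
  exact Finset.sup'_induction hs _ (fun g hg h hh => by
    have := hg.max hh
    rwa [max_self] at this) hf

lemma MeasureTheory.Integrable.finset_sup' {α : Type*} [MeasurableSpace α] {μ : Measure α}
    {s : Finset ι} (hs : s.Nonempty) {f : ι → α → ℝ} (hf : ∀ i ∈ s, Integrable (f i) μ) :
    Integrable (fun a => s.sup' hs (f · a)) μ := by
  refine (Finset.sup'_induction hs f (p := fun g => Integrable g μ) (fun _ hg _ hh => hg.sup hh)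
    hf).congr (ae_of_all _ fun a => ?_)
  exact Finset.sup'_apply hs f a

lemma hasFDerivAt_finset_sup'_of_forall_lt {E : Type*} [NormedAddCommGroup E] [NormedSpace ℝ E]
    [Fintype ι] [Nonempty ι] {f : ι → E → ℝ} {f' : ι → E →L[ℝ] ℝ} {x : E} {j₀ : ι}
    (hf : ∀ j, HasFDerivAt (f j) (f' j) x) (hlt : ∀ j ≠ j₀, f j x < f j₀ x) :
    HasFDerivAt (fun y => Finset.univ.sup' Finset.univ_nonempty (f · y)) (f' j₀) x := by
  have hle : ∀ᶠ y in 𝓝 x, ∀ j, f j y ≤ f j₀ y := by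
    refine eventually_all.2 fun j => ?_
    by_cases hj : j = j₀
    · exact Eventually.of_forall fun y => hj ▸ le_rfl
    · exact ((hf j).continuousAt.eventually_lt (hf j₀).continuousAt (hlt j hj)).mono
        fun y hy => hy.le
  refine (hf j₀).congr_of_eventuallyEq (hle.mono fun y hy => ?_)
  exact le_antisymm (Finset.sup'_le _ _ fun j _ => hy j)
    (Finset.le_sup' (f · y) (Finset.mem_univ j₀))

variable [Fintype ι] [LinearOrder ι] [Nonempty ι]

/-- The least maximizer; fixing the choice makes it a measurable function of `r`. -/
noncomputable def firstArgmax (r : ι → ℝ) : ι :=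
  (Finset.univ.filter fun j => ∀ j', r j' ≤ r j).min' <| by
    obtain ⟨j, -, hj⟩ := Finset.exists_max_image Finset.univ r Finset.univ_nonempty
    exact ⟨j, Finset.mem_filter.2 ⟨Finset.mem_univ j, fun j' => hj j' (Finset.mem_univ j')⟩⟩

lemma le_firstArgmax (r : ι → ℝ) (j : ι) : r j ≤ r (firstArgmax r) :=
  (Finset.mem_filter.1 (Finset.min'_mem (Finset.univ.filter fun j => ∀ j', r j' ≤ r j) _)).2 j

lemma firstArgmax_eq_iff {r : ι → ℝ} {j : ι} :
    firstArgmax r = j ↔ (∀ j', r j' ≤ r j) ∧ ∀ i < j, ∃ j', r i < r j' := by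
  have hmem : ∀ {i}, i ∈ Finset.univ.filter (fun j => ∀ j', r j' ≤ r j) ↔ ∀ j', r j' ≤ r i := by
    simp
  constructor
  · rintro rfl
    refine ⟨le_firstArgmax r, fun i hi => ?_⟩
    by_contra! h
    exact (Finset.min'_le _ i (hmem.2 h)).not_gt hi
  · rintro ⟨hmax, hfirst⟩
    refine le_antisymm (Finset.min'_le _ _ (hmem.2 hmax)) (Finset.le_min' _ _ _ fun i hi => ?_)
    by_contra! hij
    obtain ⟨j', hj'⟩ := hfirst i hij
    exact hj'.not_ge (hmem.1 hi j')

lemma measurable_firstArgmax {Ω : Type*} [MeasurableSpace Ω] [MeasurableSpace ι]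
    {r : ι → Ω → ℝ} (hr : ∀ j, Measurable (r j)) :
    Measurable fun ω => firstArgmax (r · ω) := by
  refine measurable_to_countable' fun j => ?_
  simp only [Set.preimage, Set.mem_singleton_iff, firstArgmax_eq_iff, Set.ofPred_and,
    Set.ofPred_forall, Set.ofPred_exists]
  exact .inter (.iInter fun j' => measurableSet_le (hr j') (hr j))
    (.iInter fun i => .iInter fun _ => .iUnion fun j' => measurableSet_lt (hr i) (hr j'))

lemma lt_firstArgmax_of_injective {r : ι → ℝ} (hr : Function.Injective r) {j : ι}
    (hj : j ≠ firstArgmax r) : r j < r (firstArgmax r) :=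
  (le_firstArgmax r j).lt_of_ne (hr.ne hj)

end FiniteMax

section ExpectedMax

lemma stronglyMeasurable_of_measurable_selector {α F ι : Type*} [MeasurableSpace α]
    [TopologicalSpace F] [AddCommMonoid F] [ContinuousAdd F] [Fintype ι] [MeasurableSpace ι]
    [MeasurableSingletonClass ι] {G : ι → α → F} (hG : ∀ j, StronglyMeasurable (G j))
    {xt : α → ι} (hxt : Measurable xt) : StronglyMeasurable fun a => G (xt a) a := by
  classical
  have hsum : (fun a => G (xt a) a) = ∑ j, (xt ⁻¹' {j}).indicator (G j) := by
    ext1 a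
    rw [Finset.sum_apply, Finset.sum_eq_single (xt a) (fun j _ hj => by simp [Ne.symm hj])
      (by simp)]
    simp
  rw [hsum]
  exact Finset.stronglyMeasurable_sum _ fun j _ =>
    (hG j).indicator (hxt (measurableSet_singleton j))

variable {E : Type*} [NormedAddCommGroup E] {d : ℕ}

lemma abs_dotProduct_le (v η : Fin d → ℝ) : |v ⬝ᵥ η| ≤ ‖v‖ * ∑ k, |η k| := by
  rw [Finset.mul_sum]
  refine (Finset.abs_sum_le_sum_abs _ _).trans (Finset.sum_le_sum fun k _ => ?_)
  rw [abs_mul]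
  exact mul_le_mul_of_nonneg_right (norm_le_pi_norm v k) (abs_nonneg _)

lemma LipschitzOnWith.dotProduct_const {a : E → Fin d → ℝ} {K : NNReal} {s : Set E}
    (ha : LipschitzOnWith K a s) (η : Fin d → ℝ) :
    LipschitzOnWith (K * ∑ k, ‖η k‖₊) (fun x => a x ⬝ᵥ η) s := by
  refine LipschitzOnWith.of_dist_le_mul fun x hx y hy => ?_
  rw [Real.dist_eq, ← sub_dotProduct]
  calc |(a x - a y) ⬝ᵥ η| ≤ ‖a x - a y‖ * ∑ k, |η k| := abs_dotProduct_le _ _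
    _ ≤ K * dist x y * ∑ k, |η k| := by
        gcongr
        rw [← dist_eq_norm]
        exact ha.dist_le_mul x hx y hy
    _ = ↑(K * ∑ k, ‖η k‖₊) * dist x y := by push_cast; simp only [Real.norm_eq_abs]; ring

lemma HasFDerivAt.dotProduct_const [NormedSpace ℝ E] {a : E → Fin d → ℝ}
    {a' : E →L[ℝ] Fin d → ℝ} {x : E} (ha : HasFDerivAt a a' x) (η : Fin d → ℝ) :
    HasFDerivAt (fun y => a y ⬝ᵥ η) (∑ k, η k • (ContinuousLinearMap.proj k ∘L a')) x :=
  HasFDerivAt.fun_sum fun k _ => ((hasFDerivAt_apply k _).comp x ha).mul_const (η k)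

lemma integrable_dotProduct {μ : Measure (Fin d → ℝ)} (hμ : ∀ k, Integrable (fun η => η k) μ)
    (v : Fin d → ℝ) : Integrable (fun η => v ⬝ᵥ η) μ :=
  integrable_finsetSum _ fun k _ => (hμ k).const_mul (v k)

theorem hasFDerivAt_integral_sup'_dotProduct [NormedSpace ℝ E] {ι : Type*} [Fintype ι]
    [Nonempty ι] [MeasurableSpace ι] [MeasurableSingletonClass ι] {μ : Measure (Fin d → ℝ)}
    (hμ : ∀ k, Integrable (fun η => η k) μ) {a : ι → E → Fin d → ℝ}
    {a' : ι → E →L[ℝ] Fin d → ℝ} {x₀ : E} (ha : ∀ j, HasStrictFDerivAt (a j) (a' j) x₀)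
    {xt : (Fin d → ℝ) → ι} (hxt : Measurable xt)
    (hmax : ∀ᵐ η ∂μ, ∀ j ≠ xt η, a j x₀ ⬝ᵥ η < a (xt η) x₀ ⬝ᵥ η) :
    Integrable (fun η => ∑ k, η k • (ContinuousLinearMap.proj k ∘L a' (xt η))) μ ∧
      HasFDerivAt (fun x => ∫ η, Finset.univ.sup' Finset.univ_nonempty (a · x ⬝ᵥ η) ∂μ)
        (∫ η, ∑ k, η k • (ContinuousLinearMap.proj k ∘L a' (xt η)) ∂μ) x₀ := by
  choose K s hs hK using fun j => (ha j).exists_lipschitzOnWith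
  have hF_int :
      ∀ x, Integrable (fun η => Finset.univ.sup' Finset.univ_nonempty (a · x ⬝ᵥ η)) μ :=
    fun x => Integrable.finset_sup' _ fun j _ => integrable_dotProduct hμ (a j x)
  have hG_meas : StronglyMeasurable fun η : Fin d → ℝ =>
      ∑ k, η k • (ContinuousLinearMap.proj k ∘L a' (xt η)) :=
    stronglyMeasurable_of_measurable_selector
      (G := fun j η => ∑ k, η k • (ContinuousLinearMap.proj k ∘L a' j))
      (fun j => Continuous.stronglyMeasurable (by fun_prop)) hxt
  refine hasFDerivAt_integral_of_dominated_loc_of_lip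
    (F := fun x η => Finset.univ.sup' Finset.univ_nonempty (a · x ⬝ᵥ η))
    (F' := fun η => ∑ k, η k • (ContinuousLinearMap.proj k ∘L a' (xt η)))
    (bound := fun η => (∑ j, (K j : ℝ)) * ∑ k, |η k|)
    (Filter.iInter_mem.2 hs) (Eventually.of_forall fun x => (hF_int x).aestronglyMeasurable)
    (hF_int x₀) hG_meas.aestronglyMeasurable (ae_of_all _ fun η => ?_)
    ((integrable_finsetSum _ fun k _ => (hμ k).abs).const_mul _) ?_
  · refine LipschitzOnWith.finset_sup' (f := fun j x => a j x ⬝ᵥ η) _ fun j _ => ?_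
    refine (((hK j).dotProduct_const η).mono (Set.iInter_subset s j)).weaken ?_
    rw [← NNReal.coe_le_coe, Real.coe_nnabs]
    refine le_trans ?_ (le_abs_self _)
    push_cast
    simp only [Real.norm_eq_abs]
    exact mul_le_mul_of_nonneg_right
      (Finset.single_le_sum (fun j _ => (K j).coe_nonneg) (Finset.mem_univ j))
      (Finset.sum_nonneg fun k _ => abs_nonneg _)
  · filter_upwards [hmax] with η hη
    exact hasFDerivAt_finset_sup'_of_forall_lt (fun j => (ha j).hasFDerivAt.dotProduct_const η) hη

end ExpectedMax

lemma hasStrictDerivAt_const_div_sqrt (c : ℝ) {t : ℝ} (ht : 0 < t) :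
    HasStrictDerivAt (fun s => c / √s) (-c / (2 * t ^ (3 / 2 : ℝ))) t := by
  have h32 : t ^ (3 / 2 : ℝ) = t * √t := by
    rw [show (3 / 2 : ℝ) = 1 + 1 / 2 by norm_num, Real.rpow_add ht, Real.rpow_one,
      Real.sqrt_eq_rpow]
  have hs : √t ≠ 0 := (Real.sqrt_pos.2 ht).ne'
  have hf : (fun s => c / √s) = fun s => c * (Inv.inv ∘ Real.sqrt) s := by
    ext s
    simp [div_eq_mul_inv]
  have hderiv : -c / (2 * t ^ (3 / 2 : ℝ)) = c * (-(√t ^ 2)⁻¹ * (1 / (2 * √t))) := by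
    rw [h32, Real.sq_sqrt ht.le]
    field_simp
  rw [hf, hderiv]
  exact ((hasStrictDerivAt_inv hs).comp t (Real.hasStrictDerivAt_sqrt ht.ne')).const_mul c

section Lagrangian

variable {d m : ℕ} (x : Fin m → Fin d → ℝ)

/-- The `k`-th diagonal entry of `A_semi(ν)`. -/
noncomputable def designSum (k : Fin d) : (Fin m → ℝ) →L[ℝ] ℝ :=
  ∑ j, x j k • ContinuousLinearMap.proj j

@[simp]
lemma designSum_apply (k : Fin d) (ν : Fin m → ℝ) : designSum x k ν = ∑ j, ν j * x j k := by
  simp [designSum, mul_comm]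

lemma designSum_single (k : Fin d) (i : Fin m) : designSum x k (Pi.single i 1) = x i k := by
  simp [Pi.single_apply]

variable (b : Fin m) (θb : Fin d → ℝ) (β : ℝ)

noncomputable def ratioCoeff (j : Fin m) (k : Fin d) : ℝ :=
  (x b k - x j k) / (β + ∑ i, θb i * (x b i - x j i))

/-- `A_semi(ν)^{-1/2} (x̄ - x_j) / (β + θ̄ᵀ(x̄ - x_j))`. -/
noncomputable def scaledCoeff (j : Fin m) (ν : Fin m → ℝ) (k : Fin d) : ℝ :=
  ratioCoeff x b θb β j k / √(designSum x k ν)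

noncomputable def scaledCoeffDeriv (j : Fin m) (ν : Fin m → ℝ) :
    (Fin m → ℝ) →L[ℝ] Fin d → ℝ :=
  ContinuousLinearMap.pi fun k =>
    (-ratioCoeff x b θb β j k / (2 * designSum x k ν ^ (3 / 2 : ℝ))) • designSum x k

noncomputable def gapFunctional : (Fin m → ℝ) →L[ℝ] ℝ :=
  ∑ j, (∑ i, θb i * (x b i - x j i)) • ContinuousLinearMap.proj j

lemma gapFunctional_single (i : Fin m) :
    gapFunctional x b θb (Pi.single i 1) = ∑ k, θb k * (x b k - x i k) := by
  simp [gapFunctional, Pi.single_apply]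

lemma ratioProc_eq_dotProduct (ν : Fin m → ℝ) (η : Fin d → ℝ) :
    ratioProc d m x b θb β ν η = fun j => scaledCoeff x b θb β j ν ⬝ᵥ η := by
  ext j
  simp only [ratioProc, scaledCoeff, ratioCoeff, dotProduct, designSum_apply, Finset.sum_div]
  exact Finset.sum_congr rfl fun k _ => by ring

lemma lagrangian_eq [Nonempty (Fin m)] (τ : ℝ) (ν : Fin m → ℝ) :
    lagrangian d m x b θb β τ ν = τ * gapFunctional x b θb ν +
      ∫ η, Finset.univ.sup' Finset.univ_nonempty (scaledCoeff x b θb β · ν ⬝ᵥ η)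
        ∂stdGaussian d := by
  simp only [lagrangian, ratioProc_eq_dotProduct]
  congr 1
  simp [gapFunctional]

variable {x b θb β}

lemma scaledCoeff_injective (hdistinct : Function.Injective (ratioCoeff x b θb β))
    {lam : Fin m → ℝ} (hlam : ∀ k, 0 < ∑ j, lam j * x j k) :
    Function.Injective fun j => scaledCoeff x b θb β j lam := by
  intro i j h
  refine hdistinct (funext fun k => ?_)
  have hk := congrFun h k
  simp only [scaledCoeff] at hk
  exact (div_left_inj' (Real.sqrt_pos.2 (by simpa using hlam k)).ne').1 hk

lemma hasStrictFDerivAt_scaledCoeff {lam : Fin m → ℝ} (hlam : ∀ k, 0 < ∑ j, lam j * x j k)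
    (j : Fin m) :
    HasStrictFDerivAt (scaledCoeff x b θb β j) (scaledCoeffDeriv x b θb β j lam) lam :=
  hasStrictFDerivAt_pi.2 fun k =>
    (hasStrictDerivAt_const_div_sqrt _ (by simpa using hlam k)).comp_hasStrictFDerivAt lam
      (designSum x k).hasStrictFDerivAt

lemma scaledCoeffDeriv_single (lam : Fin m → ℝ) (η : Fin d → ℝ) (i j : Fin m) :
    (∑ k, η k • (ContinuousLinearMap.proj k ∘L scaledCoeffDeriv x b θb β j lam))
        (Pi.single i 1) =
      -(1 / 2) * ((β + ∑ k, θb k * (x b k - x j k))⁻¹ *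
        ∑ k, (x b k - x j k) * x i k * η k / (∑ l, lam l * x l k) ^ ((3 : ℝ) / 2)) := by
  simp only [FunLike.coe_sum, Finset.sum_apply, FunLike.coe_smul, Pi.smul_apply,
    ContinuousLinearMap.coe_comp, Function.comp_apply, ContinuousLinearMap.proj_apply,
    scaledCoeffDeriv, ContinuousLinearMap.pi_apply, designSum_single, smul_eq_mul, ratioCoeff,
    Finset.mul_sum]
  simp only [designSum_apply]
  exact Finset.sum_congr rfl fun k _ => by ring

end Lagrangian

theorem lagrangian_differentiable_general (d m : ℕ) (x : Fin m → Fin d → ℝ) (b : Fin m)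
    (θb : Fin d → ℝ) (β τ : ℝ)
    (hdistinct : Function.Injective fun j => fun i =>
      (x b i - x j i) / (β + ∑ i', θb i' * (x b i' - x j i')))
    (lam : Fin m → ℝ) (hlam : ∀ i : Fin d, 0 < ∑ j, lam j * x j i) :
    (∀ᵐ η ∂ stdGaussian d, ∃! j : Fin m, ∀ j' : Fin m,
        ratioProc d m x b θb β lam η j' ≤ ratioProc d m x b θb β lam η j) ∧
    DifferentiableAt ℝ (lagrangian d m x b θb β τ) lam ∧
    ∃ xt : (Fin d → ℝ) → Fin m,
      (∀ᵐ η ∂ stdGaussian d, ∀ j' : Fin m,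
        ratioProc d m x b θb β lam η j' ≤ ratioProc d m x b θb β lam η (xt η)) ∧
      ∀ i : Fin m,
        fderiv ℝ (lagrangian d m x b θb β τ) lam (Pi.single i 1) =
          τ * (∑ k, θb k * (x b k - x i k)) -
            (1 / 2) * ∫ η,
              (β + ∑ k, θb k * (x b k - x (xt η) k))⁻¹ *
                ∑ k, (x b k - x (xt η) k) * x i k * η k /
                  (∑ l, lam l * x l k) ^ ((3 : ℝ) / 2)
              ∂ stdGaussian d := by
  have : Nonempty (Fin m) := ⟨b⟩
  set xt := fun η => firstArgmax (ratioProc d m x b θb β lam η)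
  have hinj : ∀ᵐ η ∂stdGaussian d, Function.Injective (ratioProc d m x b θb β lam η) := by
    simpa only [ratioProc_eq_dotProduct] using
      ae_injective_dotProduct_stdGaussian (scaledCoeff_injective hdistinct hlam)
  have hxt_meas : Measurable xt := measurable_firstArgmax fun j => by
    simp only [ratioProc_eq_dotProduct]
    exact (continuous_const.dotProduct continuous_id).measurable
  obtain ⟨hint, hF⟩ := hasFDerivAt_integral_sup'_dotProduct integrable_eval_stdGaussian
    (hasStrictFDerivAt_scaledCoeff (b := b) (θb := θb) (β := β) hlam) hxt_meas <| by
      filter_upwards [hinj] with η hη j hj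
      simp only [← congrFun (ratioProc_eq_dotProduct x b θb β lam η)]
      exact lt_firstArgmax_of_injective hη hj
  have hL : HasFDerivAt (lagrangian d m x b θb β τ) (τ • gapFunctional x b θb +
      ∫ η, ∑ k, η k • (ContinuousLinearMap.proj k ∘L scaledCoeffDeriv x b θb β (xt η) lam)
        ∂stdGaussian d) lam := by
    rw [funext (lagrangian_eq x b θb β τ)]
    exact ((gapFunctional x b θb).hasFDerivAt.const_mul τ).add hF
  refine ⟨?_, hL.differentiableAt, xt, ae_of_all _ fun η => le_firstArgmax _, fun i => ?_⟩
  · filter_upwards [hinj] with η hη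
    exact ⟨xt η, le_firstArgmax _, fun j hj =>
      by_contra fun hne => (hj (xt η)).not_gt (lt_firstArgmax_of_injective hη hne)⟩
  · rw [hL.fderiv, add_apply, ContinuousLinearMap.integral_apply hint]
    simp only [scaledCoeffDeriv_single, integral_const_mul, smul_apply,
      gapFunctional_single, smul_eq_mul]
    ring

/-- **Lemma 7 (differentiability of the Lagrangian objective).** On the open set of
`λ ∈ ℝ^m` whose design entries are all positive, the maximizer `x̃(η)` of the ratio
process is a.s. unique, `L` is differentiable, and
`∂L/∂λ_i = τ θ̄ᵀ(x̄ - x_i) - (1/2) E_η[(β + θ̄ᵀ(x̄ - x̃(η)))⁻¹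
  Σ_k (x̄ - x̃(η))_k x_{i,k} η_k (Σ_{j : x_{j,k}=1} λ_j)^{-3/2}]`. -/
theorem lagrangian_differentiable (d m : ℕ) (x : Fin m → Fin d → ℝ) (b : Fin m)
    (θb : Fin d → ℝ) (β τ : ℝ)
    (h01 : ∀ j i, x j i = 0 ∨ x j i = 1)
    (hxinj : Function.Injective x)
    (hcov : ∀ i : Fin d, ∃ j, x j i = 1)
    (hβ : 0 < β)
    (hgap : ∀ j, 0 < β + ∑ i, θb i * (x b i - x j i))
    (hτ : 0 ≤ τ)
    (hdistinct : Function.Injective fun j => fun i =>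
      (x b i - x j i) / (β + ∑ i', θb i' * (x b i' - x j i')))
    (lam : Fin m → ℝ) (hlam : ∀ i : Fin d, 0 < ∑ j, lam j * x j i) :
    (∀ᵐ η ∂ stdGaussian d, ∃! j : Fin m, ∀ j' : Fin m,
        ratioProc d m x b θb β lam η j' ≤ ratioProc d m x b θb β lam η j) ∧
    DifferentiableAt ℝ (lagrangian d m x b θb β τ) lam ∧
    ∃ xt : (Fin d → ℝ) → Fin m,
      (∀ᵐ η ∂ stdGaussian d, ∀ j' : Fin m,
        ratioProc d m x b θb β lam η j' ≤ ratioProc d m x b θb β lam η (xt η)) ∧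
      ∀ i : Fin m,
        fderiv ℝ (lagrangian d m x b θb β τ) lam (Pi.single i 1) =
          τ * (∑ k, θb k * (x b k - x i k)) -
            (1 / 2) * ∫ η,
              (β + ∑ k, θb k * (x b k - x (xt η) k))⁻¹ *
                ∑ k, (x b k - x (xt η) k) * x i k * η k /
                  (∑ l, lam l * x l k) ^ ((3 : ℝ) / 2)
              ∂ stdGaussian d :=
  lagrangian_differentiable_general d m x b θb β τ hdistinct lam hlam
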